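/- Let c be a simple-model cost function (depending only on direction and layer) on the infinite grid graph G with l layers, and let r, s ∈ V be two vertices. Then there exists a minimum-cost path P between r and s in (G, c) that contains at most one maximal sequence of consecutive horizontal edges and at most one maximal sequence of consecutive vertical edges (and hence at most three maximal sequences of consecutive via edges). -/

import Mathlib

/-!
Write `Φ` for the prefix sums of the via costs, so that a monotone run of vias between layers
`a` and `b` costs `dist (Φ a) (Φ b)`. A staircase from `u` to `s` goes by vias to a layer `p`,
runs horizontally on `p`, goes by vias to a layer `q`, runs vertically on `q` and goes by vias to
the layer of `s` (or runs vertically first). Along every edge `u v`, a staircase from `v` yields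
one from `u` costing at most the edge more: for a horizontal edge on layer `z`, move the
horizontal run to `z` if `z` is the cheaper layer. So every walk from `r` to `s` costs at least
some staircase from `r`, and a cheapest staircase, which exists as there are finitely many, is
realized by a walk whose directions read via, one of hor/ver, via, the other, via.
-/

/-- Vertices of the infinite grid graph: `(x, y, z)` where `z` is the layer. -/
abbrev Vtx : Type := ℤ × ℤ × ℤ

/-- Two vertices of the infinite grid graph with layers `1, …, l` are adjacent iff both have
their layer coordinate in `{1, …, l}` and they differ by exactly `1` in exactly one
coordinate.  An edge changing the first coordinate is horizontal, one changing the second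
coordinate is vertical, and one changing the third coordinate is a via. -/
def Adj (l : ℤ) (u v : Vtx) : Prop :=
  1 ≤ u.2.2 ∧ u.2.2 ≤ l ∧ 1 ≤ v.2.2 ∧ v.2.2 ≤ l ∧
    |u.1 - v.1| + |u.2.1 - v.2.1| + |u.2.2 - v.2.2| = 1

/-- Simple-model edge cost: a horizontal (resp. vertical) edge on layer `z` costs `ch z`
(resp. `cv z`) and a via between layers `z` and `z+1` costs `cvia z`. -/
def ecost (ch cv cvia : ℤ → ℝ) (u v : Vtx) : ℝ :=
  if u.1 ≠ v.1 then ch u.2.2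
  else if u.2.1 ≠ v.2.1 then cv u.2.2
  else cvia (min u.2.2 v.2.2)

/-- The cost of a walk (given as the list of its vertices) is the sum of its edge costs. -/
def wcost (c : Vtx → Vtx → ℝ) : List Vtx → ℝ
  | [] => 0
  | [_] => 0
  | u :: v :: P => c u v + wcost c (v :: P)

/-- `P` is a walk from `u` to `v` with respect to the adjacency relation `A`. -/
def IsWalkA (A : Vtx → Vtx → Prop) (P : List Vtx) (u v : Vtx) : Prop :=
  P ≠ [] ∧ P.Chain' A ∧ P.head? = some u ∧ P.getLast? = some v

/-- The distance between two vertices: the infimum cost of a walk between them. -/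
noncomputable def gdistA (A : Vtx → Vtx → Prop) (c : Vtx → Vtx → ℝ) (u v : Vtx) : ℝ :=
  sInf { m : ℝ | ∃ P, IsWalkA A P u v ∧ wcost c P = m }

/-- The distance from a vertex to a set of vertices. -/
noncomputable def gdistSetA (A : Vtx → Vtx → Prop) (c : Vtx → Vtx → ℝ) (u : Vtx)
    (T : Set Vtx) : ℝ :=
  sInf { m : ℝ | ∃ P v, v ∈ T ∧ IsWalkA A P u v ∧ wcost c P = m }

/-- The direction of an edge: horizontal, vertical, or via. -/
inductive Dir : Type
  | hor | ver | via
deriving DecidableEq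

/-- The direction of the edge from `u` to `v`. -/
def dirOf (u v : Vtx) : Dir :=
  if u.1 ≠ v.1 then .hor else if u.2.1 ≠ v.2.1 then .ver else .via

/-- The list of directions of the edges of a walk. -/
def dirs (P : List Vtx) : List Dir := List.zipWith dirOf P P.tail

section Destutter

variable {α : Type*} [DecidableEq α]

theorem count_destutter_cons_le (d x : α) (L : List α) :
    ((x :: L).destutter (· ≠ ·)).count d ≤ [x].count d + (L.destutter (· ≠ ·)).count d := by
  cases L with
  | nil => simp
  | cons y L =>
    rw [List.destutter_cons_cons]
    split_ifs with hxy
    · rw [List.count_cons, ← List.destutter_cons', List.count_singleton]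
      omega
    · rw [not_not.1 hxy, ← List.destutter_cons']
      exact Nat.le_add_left _ _

theorem destutter_replicate_succ_append (x : α) (n : ℕ) (L : List α) :
    (List.replicate (n + 1) x ++ L).destutter (· ≠ ·) = (x :: L).destutter (· ≠ ·) := by
  induction n with
  | zero => rfl
  | succ n ih =>
    rw [List.replicate_succ, List.cons_append, List.replicate_succ, List.cons_append,
      List.destutter_cons_cons, if_neg (by simp),
      ← List.destutter_cons', ← List.cons_append, ← List.replicate_succ, ih]

theorem count_destutter_replicate_append_le (d x : α) (n : ℕ) (L : List α) :
    ((List.replicate n x ++ L).destutter (· ≠ ·)).count d ≤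
      [x].count d + (L.destutter (· ≠ ·)).count d := by
  cases n with
  | zero => simp
  | succ n =>
    rw [destutter_replicate_succ_append]
    exact count_destutter_cons_le d x L

def runWord (R : List (α × ℕ)) : List α := R.flatMap fun r => List.replicate r.2 r.1

theorem count_destutter_runWord_le (d : α) :
    ∀ R : List (α × ℕ), ((runWord R).destutter (· ≠ ·)).count d ≤ (R.map Prod.fst).count d
  | [] => by simp [runWord]
  | (x, n) :: R => by
    have hhead := count_destutter_replicate_append_le d x n (runWord R)
    have htail := count_destutter_runWord_le d R
    simp only [runWord, List.flatMap_cons, List.map_cons, List.count_cons, List.count_nil] at *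
    omega

end Destutter

section Walks

theorem zipWith_tail_append_cons {α β : Type*} (f : α → α → β) :
    ∀ (P : List α) (w : α) (Q : List α),
      List.zipWith f (P ++ w :: Q) (P ++ w :: Q).tail =
        List.zipWith f (P ++ [w]) (P ++ [w]).tail ++ List.zipWith f (w :: Q) Q
  | [], _, _ => rfl
  | [_], _, _ => rfl
  | a :: b :: P, w, Q => by
    simpa using zipWith_tail_append_cons f (b :: P) w Q

theorem wcost_eq_sum_zipWith (c : Vtx → Vtx → ℝ) :
    ∀ P : List Vtx, wcost c P = (List.zipWith c P P.tail).sum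
  | [] => rfl
  | [_] => rfl
  | u :: v :: P => by simp [wcost, wcost_eq_sum_zipWith c (v :: P)]

def Traverses (A : Vtx → Vtx → Prop) (c : Vtx → Vtx → ℝ) (P : List Vtx) (u v : Vtx) (x : ℝ)
    (D : List Dir) : Prop :=
  IsWalkA A P u v ∧ wcost c P = x ∧ dirs P = D

variable {A : Vtx → Vtx → Prop} {c : Vtx → Vtx → ℝ} {P Q : List Vtx} {u v w : Vtx} {x y : ℝ}
  {D E : List Dir}

theorem traverses_pair (h : A u v) : Traverses A c [u, v] u v (c u v) [dirOf u v] :=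
  ⟨⟨by simp, List.isChain_pair.2 h, rfl, rfl⟩, by simp [wcost], rfl⟩

theorem Traverses.append (h₁ : Traverses A c P u v x D) (h₂ : Traverses A c Q v w y E) :
    Traverses A c (P ++ Q.tail) u w (x + y) (D ++ E) := by
  obtain ⟨⟨-, hPA, hPu, hPv⟩, rfl, rfl⟩ := h₁
  obtain ⟨⟨-, hQA, hQv, hQw⟩, rfl, rfl⟩ := h₂
  obtain ⟨P, rfl⟩ := List.getLast?_eq_some_iff.1 hPv
  obtain ⟨Q, rfl⟩ := List.head?_eq_some_iff.1 hQv
  have hlink := (List.isChain_append.1 hPA).2.2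
  rw [List.tail_cons, List.append_assoc, List.singleton_append]
  refine ⟨⟨by simp, List.isChain_append.2 ⟨hPA.left_of_append, hQA, ?_⟩, ?_, ?_⟩, ?_, ?_⟩
  · simpa using hlink
  · cases P <;> simp_all
  · simpa [List.getLast?_append] using hQw
  · rw [wcost_eq_sum_zipWith, zipWith_tail_append_cons, List.sum_append,
      wcost_eq_sum_zipWith, wcost_eq_sum_zipWith]
    rfl
  · rw [dirs, zipWith_tail_append_cons]
    rfl

theorem traverses_map_range {g : ℕ → Vtx} {w : ℕ → ℝ} {d : Dir} :
    ∀ {n : ℕ}, (∀ i < n, A (g i) (g (i + 1))) →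
      (∀ i < n, c (g i) (g (i + 1)) = w (i + 1) - w i) → (∀ i < n, dirOf (g i) (g (i + 1)) = d) →
      Traverses A c ((List.range (n + 1)).map g) (g 0) (g n) (w n - w 0) (List.replicate n d)
  | 0, _, _, _ => ⟨⟨by simp, List.isChain_singleton _, rfl, rfl⟩, by simp [wcost], rfl⟩
  | n + 1, hA, hc, hd => by
    have h := (traverses_map_range (n := n) (fun i hi => hA i (by omega))
      (fun i hi => hc i (by omega)) (fun i hi => hd i (by omega))).append
      (traverses_pair (c := c) (hA n (by omega)))
    rw [hc n (by omega), hd n (by omega), ← List.replicate_succ', sub_add_sub_cancel'] at h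
    rwa [List.range_succ (n := n + 1), List.map_append]

end Walks

section Staircase

variable (l : ℤ) (Φ : ℤ → ℝ) (t : ℤ)

def stairCost (c₁ c₂ : ℤ → ℝ) (a b : ℕ) (z p q : ℤ) : ℝ :=
  a * c₁ p + b * c₂ q + (dist (Φ z) (Φ p) + dist (Φ p) (Φ q) + dist (Φ q) (Φ t))

/-- `x` bounds the cost of some staircase to layer `t` from a vertex on layer `z` whose coordinates
differ from the target's by `a` and `b`; `c₁` and `c₂` are the costs of the two directions. -/
def StairBounded (c₁ c₂ : ℤ → ℝ) (a b : ℕ) (z : ℤ) (x : ℝ) : Prop :=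
  ∃ p ∈ Set.Icc 1 l, ∃ q ∈ Set.Icc 1 l,
    stairCost Φ t c₁ c₂ a b z p q ≤ x ∨ stairCost Φ t c₂ c₁ b a z p q ≤ x

variable {l Φ t} {c₁ c₂ : ℤ → ℝ} {a a' b b' : ℕ} {z z' : ℤ} {x : ℝ}

theorem StairBounded.swap (h : StairBounded l Φ t c₁ c₂ a b z x) :
    StairBounded l Φ t c₂ c₁ b a z x :=
  let ⟨p, hp, q, hq, h⟩ := h
  ⟨p, hp, q, hq, h.symm⟩

theorem stairBounded_target (ht : t ∈ Set.Icc 1 l) : StairBounded l Φ t c₁ c₂ 0 0 t 0 :=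
  ⟨t, ht, t, ht, .inl (by simp [stairCost])⟩

theorem StairBounded.via (h : StairBounded l Φ t c₁ c₂ a b z' x) :
    StairBounded l Φ t c₁ c₂ a b z (dist (Φ z) (Φ z') + x) := by
  obtain ⟨p, hp, q, hq, h⟩ := h
  refine ⟨p, hp, q, hq, h.imp (fun h => ?_) (fun h => ?_)⟩ <;>
  · have := dist_triangle (Φ z) (Φ z') (Φ p)
    unfold stairCost at *
    linarith

theorem StairBounded.step_fst (hc : ∀ k ∈ Set.Icc 1 l, 0 ≤ c₁ k) (hz : z ∈ Set.Icc 1 l)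
    (ha : a' ≤ a + 1) (h : StairBounded l Φ t c₁ c₂ a b z x) :
    StairBounded l Φ t c₁ c₂ a' b z (c₁ z + x) := by
  have step : ∀ k ∈ Set.Icc 1 l, (a' : ℝ) * c₁ k ≤ a * c₁ k + c₁ k := fun k hk => by
    have : (a' : ℝ) ≤ a + 1 := by exact_mod_cast ha
    nlinarith [hc k hk]
  have cheaper : ∀ k, c₁ z < c₁ k → (a : ℝ) * c₁ z ≤ a * c₁ k := fun k hk =>
    mul_le_mul_of_nonneg_left hk.le a.cast_nonneg
  -- if layer `z` is cheaper for the `c₁`-run than the layer used so far, move the run to `z`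
  obtain ⟨p, hp, q, hq, h | h⟩ := h
  · by_cases hpz : c₁ p ≤ c₁ z
    · refine ⟨p, hp, q, hq, .inl ?_⟩
      unfold stairCost at *
      linarith [step p hp, mul_le_mul_of_nonneg_left hpz a'.cast_nonneg]
    · refine ⟨z, hz, q, hq, .inl ?_⟩
      have := dist_triangle (Φ z) (Φ p) (Φ q)
      unfold stairCost at *
      rw [dist_self]
      linarith [step z hz, cheaper p (not_le.1 hpz)]
  · by_cases hqz : c₁ q ≤ c₁ z
    · refine ⟨p, hp, q, hq, .inr ?_⟩
      unfold stairCost at *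
      linarith [step q hq, mul_le_mul_of_nonneg_left hqz a'.cast_nonneg]
    · refine ⟨z, hz, p, hp, .inl ?_⟩
      have := dist_triangle (Φ p) (Φ q) (Φ t)
      unfold stairCost at *
      rw [dist_self]
      linarith [step z hz, cheaper q (not_le.1 hqz)]

theorem StairBounded.step_snd (hc : ∀ k ∈ Set.Icc 1 l, 0 ≤ c₂ k) (hz : z ∈ Set.Icc 1 l)
    (hb : b' ≤ b + 1) (h : StairBounded l Φ t c₁ c₂ a b z x) :
    StairBounded l Φ t c₁ c₂ a b' z (c₂ z + x) :=
  (h.swap.step_fst hc hz hb).swap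

theorem exists_min_stairCost (hl : 1 ≤ l) (c₁ c₂ : ℤ → ℝ) (a b : ℕ) (z : ℤ) :
    ∃ p ∈ Set.Icc 1 l, ∃ q ∈ Set.Icc 1 l, ∃ x,
      (stairCost Φ t c₁ c₂ a b z p q = x ∨ stairCost Φ t c₂ c₁ b a z p q = x) ∧
        ∀ y, StairBounded l Φ t c₁ c₂ a b z y → x ≤ y := by
  let cost : ℤ × ℤ → ℝ := fun pq =>
    min (stairCost Φ t c₁ c₂ a b z pq.1 pq.2) (stairCost Φ t c₂ c₁ b a z pq.1 pq.2)
  obtain ⟨⟨p, q⟩, hpq, hmin⟩ :=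
    (Finset.Icc 1 l ×ˢ Finset.Icc 1 l).exists_min_image cost ⟨(1, 1), by simp [hl]⟩
  simp only [Finset.mem_product, Finset.mem_Icc] at hpq
  refine ⟨p, hpq.1, q, hpq.2, cost (p, q), (min_choice _ _).imp Eq.symm Eq.symm, ?_⟩
  rintro y ⟨p', hp', q', hq', h⟩
  have hle := hmin (p', q') (by simpa using ⟨hp', hq'⟩)
  rcases h with h | h
  · exact hle.trans ((min_le_left _ _).trans h)
  · exact hle.trans ((min_le_right _ _).trans h)

end Staircase

section Lines

def linePt (a b : ℤ) (i : ℕ) : ℤ := if a ≤ b then a + i else a - i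

def gridLine (G : ℤ → Vtx) (a b : ℤ) : List Vtx :=
  (List.range ((a - b).natAbs + 1)).map (G ∘ linePt a b)

variable {a b : ℤ}

theorem linePt_zero : linePt a b 0 = a := by simp [linePt]

theorem linePt_natAbs : linePt a b (a - b).natAbs = b := by
  unfold linePt; split_ifs <;> omega

theorem natAbs_linePt_sub_succ (i : ℕ) : (linePt a b i - linePt a b (i + 1)).natAbs = 1 := by
  unfold linePt; split_ifs <;> omega

theorem linePt_ne_succ (i : ℕ) : linePt a b i ≠ linePt a b (i + 1) := by
  unfold linePt; split_ifs <;> omega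

theorem linePt_mem_Icc {m M : ℤ} (ha : a ∈ Set.Icc m M) (hb : b ∈ Set.Icc m M) {i : ℕ}
    (hi : i ≤ (a - b).natAbs) : linePt a b i ∈ Set.Icc m M := by
  obtain ⟨ha₁, ha₂⟩ := ha
  obtain ⟨hb₁, hb₂⟩ := hb
  unfold linePt; constructor <;> split_ifs <;> omega

end Lines

section Grid

noncomputable def viaPot (cvia : ℤ → ℝ) (z : ℤ) : ℝ := ∑ k ∈ Finset.Ico 1 z, cvia k

variable {l : ℤ} {cvia : ℤ → ℝ}

theorem traverses_hor (ch cv cvia : ℤ → ℝ) {z : ℤ} (hz : z ∈ Set.Icc 1 l) (y a b : ℤ) :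
    Traverses (Adj l) (ecost ch cv cvia) (gridLine (fun k => (k, y, z)) a b) (a, y, z) (b, y, z)
      ((a - b).natAbs * ch z) (List.replicate (a - b).natAbs .hor) := by
  have h := traverses_map_range (A := Adj l) (c := ecost ch cv cvia) (n := (a - b).natAbs)
    (g := fun i => (linePt a b i, y, z)) (w := fun i => i * ch z) (d := .hor)
    (fun i _ => ⟨hz.1, hz.2, hz.1, hz.2, by simp [Int.abs_eq_natAbs, natAbs_linePt_sub_succ]⟩)
    (fun i _ => by simp [ecost, linePt_ne_succ]; ring)
    (fun i _ => by simp [dirOf, linePt_ne_succ])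
  simp only [linePt_zero, linePt_natAbs, CharP.cast_eq_zero, zero_mul, sub_zero] at h
  exact h

theorem traverses_ver (ch cv cvia : ℤ → ℝ) {z : ℤ} (hz : z ∈ Set.Icc 1 l) (x a b : ℤ) :
    Traverses (Adj l) (ecost ch cv cvia) (gridLine (fun k => (x, k, z)) a b) (x, a, z) (x, b, z)
      ((a - b).natAbs * cv z) (List.replicate (a - b).natAbs .ver) := by
  have h := traverses_map_range (A := Adj l) (c := ecost ch cv cvia) (n := (a - b).natAbs)
    (g := fun i => (x, linePt a b i, z)) (w := fun i => i * cv z) (d := .ver)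
    (fun i _ => ⟨hz.1, hz.2, hz.1, hz.2, by simp [Int.abs_eq_natAbs, natAbs_linePt_sub_succ]⟩)
    (fun i _ => by simp [ecost, linePt_ne_succ]; ring)
    (fun i _ => by simp [dirOf, linePt_ne_succ])
  simp only [linePt_zero, linePt_natAbs, CharP.cast_eq_zero, zero_mul, sub_zero] at h
  exact h

theorem viaPot_add_one {z : ℤ} (hz : 1 ≤ z) : viaPot cvia (z + 1) = viaPot cvia z + cvia z := by
  rw [viaPot, viaPot, ← Finset.insert_Ico_right_eq_Ico_add_one hz, Finset.sum_insert (by simp),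
    add_comm]

theorem viaPot_monotoneOn (hcvia : ∀ k ∈ Set.Ico 1 l, 0 ≤ cvia k) :
    MonotoneOn (viaPot cvia) (Set.Icc 1 l) := fun _ _ _ hb hab =>
  Finset.sum_le_sum_of_subset_of_nonneg (Finset.Ico_subset_Ico_right hab) fun k hk _ => by
    rw [Finset.mem_Ico] at hk
    exact hcvia k ⟨hk.1, hk.2.trans_le hb.2⟩

theorem cvia_min_eq_dist (hcvia : ∀ k ∈ Set.Ico 1 l, 0 ≤ cvia k) {j k : ℤ}
    (hj : j ∈ Set.Icc 1 l) (hk : k ∈ Set.Icc 1 l) (hjk : (j - k).natAbs = 1) :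
    cvia (min j k) = dist (viaPot cvia j) (viaPot cvia k) := by
  obtain rfl | rfl : j = k + 1 ∨ k = j + 1 := by omega
  · rw [min_eq_right (by omega), viaPot_add_one hk.1, Real.dist_eq, add_sub_cancel_left,
      abs_of_nonneg (hcvia k ⟨hk.1, by linarith [hj.2]⟩)]
  · rw [min_eq_left (by omega), viaPot_add_one hj.1, dist_comm, Real.dist_eq, add_sub_cancel_left,
      abs_of_nonneg (hcvia j ⟨hj.1, by linarith [hk.2]⟩)]

theorem dist_viaPot_of_le (hcvia : ∀ k ∈ Set.Ico 1 l, 0 ≤ cvia k) {a b : ℤ}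
    (ha : a ∈ Set.Icc 1 l) (hb : b ∈ Set.Icc 1 l) (hab : a ≤ b) :
    dist (viaPot cvia a) (viaPot cvia b) = viaPot cvia b - viaPot cvia a := by
  rw [Real.dist_eq, abs_sub_comm, abs_of_nonneg (sub_nonneg.2 (viaPot_monotoneOn hcvia ha hb hab))]

theorem traverses_via (ch cv : ℤ → ℝ) (hcvia : ∀ k ∈ Set.Ico 1 l, 0 ≤ cvia k) {a b : ℤ}
    (ha : a ∈ Set.Icc 1 l) (hb : b ∈ Set.Icc 1 l) (x y : ℤ) :
    Traverses (Adj l) (ecost ch cv cvia) (gridLine (fun k => (x, y, k)) a b) (x, y, a) (x, y, b)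
      (dist (viaPot cvia a) (viaPot cvia b)) (List.replicate (a - b).natAbs .via) := by
  have hmem := fun i (hi : i ≤ (a - b).natAbs) => linePt_mem_Icc ha hb hi
  have h := traverses_map_range (A := Adj l) (c := ecost ch cv cvia) (n := (a - b).natAbs)
    (g := fun i => (x, y, linePt a b i)) (d := .via)
    (w := fun i => if a ≤ b then viaPot cvia (linePt a b i) else -viaPot cvia (linePt a b i))
    (fun i hi => ⟨(hmem i hi.le).1, (hmem i hi.le).2, (hmem (i + 1) hi).1, (hmem (i + 1) hi).2,
      by simp [Int.abs_eq_natAbs, natAbs_linePt_sub_succ]⟩)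
    (fun i hi => by
      have h₁ := hmem i hi.le
      have h₂ := hmem (i + 1) hi
      simp only [ecost, ne_eq, not_true_eq_false, if_false]
      rw [cvia_min_eq_dist hcvia h₁ h₂ (natAbs_linePt_sub_succ i)]
      simp only [linePt] at h₁ h₂ ⊢
      split_ifs at h₁ h₂ ⊢
      · exact dist_viaPot_of_le hcvia h₁ h₂ (by omega)
      · rw [dist_comm, dist_viaPot_of_le hcvia h₂ h₁ (by omega)]
        ring)
    (fun i _ => by simp [dirOf])
  simp only [linePt_zero, linePt_natAbs] at h
  convert h using 1
  · rfl
  split_ifs with hab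
  · exact dist_viaPot_of_le hcvia ha hb hab
  · rw [dist_comm, dist_viaPot_of_le hcvia hb ha (not_le.1 hab).le]
    ring

variable {ch cv : ℤ → ℝ}

theorem adj_cases {u v : Vtx} (h : Adj l u v) :
    ((u.1 - v.1).natAbs = 1 ∧ u.2.1 = v.2.1 ∧ u.2.2 = v.2.2) ∨
    (u.1 = v.1 ∧ (u.2.1 - v.2.1).natAbs = 1 ∧ u.2.2 = v.2.2) ∨
    (u.1 = v.1 ∧ u.2.1 = v.2.1 ∧ (u.2.2 - v.2.2).natAbs = 1) := by
  have h := h.2.2.2.2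
  simp only [Int.abs_eq_natAbs] at h
  omega

theorem StairBounded.of_adj (hch : ∀ k ∈ Set.Icc 1 l, 0 ≤ ch k)
    (hcv : ∀ k ∈ Set.Icc 1 l, 0 ≤ cv k) (hcvia : ∀ k ∈ Set.Ico 1 l, 0 ≤ cvia k) (s : Vtx)
    {u v : Vtx} {x : ℝ} (huv : Adj l u v)
    (h : StairBounded l (viaPot cvia) s.2.2 ch cv (v.1 - s.1).natAbs (v.2.1 - s.2.1).natAbs v.2.2
      x) :
    StairBounded l (viaPot cvia) s.2.2 ch cv (u.1 - s.1).natAbs (u.2.1 - s.2.1).natAbs u.2.2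
      (ecost ch cv cvia u v + x) := by
  have hu : u.2.2 ∈ Set.Icc 1 l := ⟨huv.1, huv.2.1⟩
  have hv : v.2.2 ∈ Set.Icc 1 l := ⟨huv.2.2.1, huv.2.2.2.1⟩
  rcases adj_cases huv with ⟨hx, hy, hz⟩ | ⟨hx, hy, hz⟩ | ⟨hx, hy, hz⟩
  · rw [ecost, if_pos (by rintro h; simp [h] at hx), hy, hz]
    exact h.step_fst hch hv (by omega)
  · rw [ecost, if_neg (by simp [hx]), if_pos (by rintro h; simp [h] at hy), hx, hz]
    exact h.step_snd hcv hv (by omega)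
  · rw [ecost, if_neg (by simp [hx]), if_neg (by simp [hy]), cvia_min_eq_dist hcvia hu hv hz, hx,
      hy]
    exact h.via

theorem stairBounded_wcost (hch : ∀ k ∈ Set.Icc 1 l, 0 ≤ ch k)
    (hcv : ∀ k ∈ Set.Icc 1 l, 0 ≤ cv k) (hcvia : ∀ k ∈ Set.Ico 1 l, 0 ≤ cvia k) {s : Vtx}
    (hs : s.2.2 ∈ Set.Icc 1 l) :
    ∀ {Q : List Vtx} {u : Vtx}, Q.IsChain (Adj l) → Q.head? = some u → Q.getLast? = some s →
      StairBounded l (viaPot cvia) s.2.2 ch cv (u.1 - s.1).natAbs (u.2.1 - s.2.1).natAbs u.2.2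
        (wcost (ecost ch cv cvia) Q)
  | [], _, _, hu, _ => by simp at hu
  | [_], _, _, hu, hv => by
    obtain rfl := Option.some.inj hu
    obtain rfl := Option.some.inj hv
    simpa [wcost] using stairBounded_target hs
  | _ :: v :: Q, _, hQ, hu, hv => by
    obtain rfl := Option.some.inj hu
    rw [List.isChain_cons_cons] at hQ
    exact (stairBounded_wcost hch hcv hcvia hs hQ.2 rfl (by simpa using hv)).of_adj
      hch hcv hcvia s hQ.1

theorem exists_traverses_horFirst (hcvia : ∀ k ∈ Set.Ico 1 l, 0 ≤ cvia k) {r s : Vtx}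
    (hr : r.2.2 ∈ Set.Icc 1 l) (hs : s.2.2 ∈ Set.Icc 1 l) {p q : ℤ} (hp : p ∈ Set.Icc 1 l)
    (hq : q ∈ Set.Icc 1 l) :
    ∃ P, Traverses (Adj l) (ecost ch cv cvia) P r s
      (stairCost (viaPot cvia) s.2.2 ch cv (r.1 - s.1).natAbs (r.2.1 - s.2.1).natAbs r.2.2 p q)
      (runWord [(.via, (r.2.2 - p).natAbs), (.hor, (r.1 - s.1).natAbs), (.via, (p - q).natAbs),
        (.ver, (r.2.1 - s.2.1).natAbs), (.via, (q - s.2.2).natAbs)]) := by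
  have h := (traverses_via ch cv hcvia hr hp r.1 r.2.1).append <|
    (traverses_hor ch cv cvia hp r.2.1 r.1 s.1).append <|
    (traverses_via ch cv hcvia hp hq s.1 r.2.1).append <|
    (traverses_ver ch cv cvia hq s.1 r.2.1 s.2.1).append <|
    traverses_via ch cv hcvia hq hs s.1 s.2.1
  obtain ⟨hP, hcost, hdirs⟩ := h
  exact ⟨_, hP, hcost.trans (by unfold stairCost; ring), hdirs.trans (by simp [runWord])⟩

theorem exists_traverses_verFirst (hcvia : ∀ k ∈ Set.Ico 1 l, 0 ≤ cvia k) {r s : Vtx}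
    (hr : r.2.2 ∈ Set.Icc 1 l) (hs : s.2.2 ∈ Set.Icc 1 l) {p q : ℤ} (hp : p ∈ Set.Icc 1 l)
    (hq : q ∈ Set.Icc 1 l) :
    ∃ P, Traverses (Adj l) (ecost ch cv cvia) P r s
      (stairCost (viaPot cvia) s.2.2 cv ch (r.2.1 - s.2.1).natAbs (r.1 - s.1).natAbs r.2.2 p q)
      (runWord [(.via, (r.2.2 - p).natAbs), (.ver, (r.2.1 - s.2.1).natAbs), (.via, (p - q).natAbs),
        (.hor, (r.1 - s.1).natAbs), (.via, (q - s.2.2).natAbs)]) := by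
  have h := (traverses_via ch cv hcvia hr hp r.1 r.2.1).append <|
    (traverses_ver ch cv cvia hp r.1 r.2.1 s.2.1).append <|
    (traverses_via ch cv hcvia hp hq r.1 s.2.1).append <|
    (traverses_hor ch cv cvia hq s.2.1 r.1 s.1).append <|
    traverses_via ch cv hcvia hq hs s.1 s.2.1
  obtain ⟨hP, hcost, hdirs⟩ := h
  exact ⟨_, hP, hcost.trans (by unfold stairCost; ring), hdirs.trans (by simp [runWord])⟩

theorem exists_walk_of_stairCost (hcvia : ∀ k ∈ Set.Ico 1 l, 0 ≤ cvia k) {r s : Vtx}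
    (hr : r.2.2 ∈ Set.Icc 1 l) (hs : s.2.2 ∈ Set.Icc 1 l) {p q : ℤ} (hp : p ∈ Set.Icc 1 l)
    (hq : q ∈ Set.Icc 1 l) {x : ℝ}
    (hx : stairCost (viaPot cvia) s.2.2 ch cv (r.1 - s.1).natAbs (r.2.1 - s.2.1).natAbs r.2.2 p q =
        x ∨
      stairCost (viaPot cvia) s.2.2 cv ch (r.2.1 - s.2.1).natAbs (r.1 - s.1).natAbs r.2.2 p q =
        x) :
    ∃ P, IsWalkA (Adj l) P r s ∧ wcost (ecost ch cv cvia) P = x ∧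
      ((dirs P).destutter (· ≠ ·)).count Dir.hor ≤ 1 ∧
      ((dirs P).destutter (· ≠ ·)).count Dir.ver ≤ 1 ∧
      ((dirs P).destutter (· ≠ ·)).count Dir.via ≤ 3 := by
  rcases hx with rfl | rfl
  · obtain ⟨P, hP, hcost, hdirs⟩ := exists_traverses_horFirst hcvia hr hs hp hq
    refine ⟨P, hP, hcost, ?_, ?_, ?_⟩ <;>
      exact hdirs ▸ (count_destutter_runWord_le _ _).trans (by simp)
  · obtain ⟨P, hP, hcost, hdirs⟩ := exists_traverses_verFirst hcvia hr hs hp hq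
    refine ⟨P, hP, hcost, ?_, ?_, ?_⟩ <;>
      exact hdirs ▸ (count_destutter_runWord_le _ _).trans (by simp)

end Grid

/-- In the simple cost model there is a minimum-cost path between `r` and `s`
containing at most one maximal sequence of consecutive horizontal edges and at most one
maximal sequence of consecutive vertical edges (and hence at most three maximal sequences of
consecutive via edges).  The number of maximal runs of a direction is the number of
occurrences of that direction in the list of edge directions after collapsing adjacent
duplicates (`List.destutter (· ≠ ·)`). -/
theorem stmt0 (l : ℤ) (hl : 1 ≤ l) (ch cv cvia : ℤ → ℝ)
    (hch : ∀ z, 1 ≤ z → z ≤ l → 0 < ch z)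
    (hcv : ∀ z, 1 ≤ z → z ≤ l → 0 < cv z)
    (hcvia : ∀ z, 1 ≤ z → z < l → 0 < cvia z)
    (r s : Vtx) (hr : 1 ≤ r.2.2 ∧ r.2.2 ≤ l) (hs : 1 ≤ s.2.2 ∧ s.2.2 ≤ l) :
    ∃ P : List Vtx, IsWalkA (Adj l) P r s ∧
      (∀ Q : List Vtx, IsWalkA (Adj l) Q r s →
        wcost (ecost ch cv cvia) P ≤ wcost (ecost ch cv cvia) Q) ∧
      ((dirs P).destutter (· ≠ ·)).count Dir.hor ≤ 1 ∧
      ((dirs P).destutter (· ≠ ·)).count Dir.ver ≤ 1 ∧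
      ((dirs P).destutter (· ≠ ·)).count Dir.via ≤ 3 := by
  have hch' : ∀ k ∈ Set.Icc 1 l, 0 ≤ ch k := fun k hk => (hch k hk.1 hk.2).le
  have hcv' : ∀ k ∈ Set.Icc 1 l, 0 ≤ cv k := fun k hk => (hcv k hk.1 hk.2).le
  have hcvia' : ∀ k ∈ Set.Ico 1 l, 0 ≤ cvia k := fun k hk => (hcvia k hk.1 hk.2).le
  obtain ⟨p, hp, q, hq, x, hx, hmin⟩ := exists_min_stairCost
    (Φ := viaPot cvia) (t := s.2.2) hl ch cv (r.1 - s.1).natAbs (r.2.1 - s.2.1).natAbs r.2.2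
  obtain ⟨P, hP, hcost, hcount⟩ := exists_walk_of_stairCost hcvia' hr hs hp hq hx
  exact ⟨P, hP, fun Q hQ => hcost ▸ hmin _ (stairBounded_wcost hch' hcv' hcvia' hs hQ.2.1 hQ.2.2.1
    hQ.2.2.2), hcount⟩
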